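/- In the Classic Variant of the Mixed Deletion Game played on path graphs, no path position P_n has a game value equal to a negative integer. -/

import Mathlib

namespace SetTheory

/-- Pre-games (Conway), as in the older Mathlib `SetTheory.PGame`. -/
inductive PGame : Type (u + 1)
  | mk : ∀ α β : Type u, (α → PGame) → (β → PGame) → PGame

namespace PGame

/-- Immediate option relation. -/
inductive IsOpt : PGame.{u} → PGame.{u} → Prop
  | moveLeft {xl xr : Type u} {xL : xl → PGame} {xR : xr → PGame} (i : xl) :
      IsOpt (xL i) (mk xl xr xL xR)
  | moveRight {xl xr : Type u} {xL : xl → PGame} {xR : xr → PGame} (j : xr) :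
      IsOpt (xR j) (mk xl xr xL xR)

theorem isOpt_wf : WellFounded IsOpt.{u} :=
  ⟨fun x => by
    induction x with
    | mk l r L R IHl IHr =>
      refine ⟨_, fun y h => ?_⟩
      cases h with
      | moveLeft i => exact IHl i
      | moveRight j => exact IHr j⟩

instance : WellFoundedRelation PGame.{u} := ⟨IsOpt, isOpt_wf⟩

/-- The pair `(x ≤ y, x ⧏ y)`. -/
noncomputable def leLF (x : PGame.{u}) : PGame.{u} → Prop × Prop :=
  PGame.rec (motive := fun _ => PGame.{u} → Prop × Prop)
    (fun xl xr xL xR IHxl IHxr y =>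
      PGame.rec (motive := fun _ => Prop × Prop)
        (fun yl yr yL yR IHyl IHyr =>
          ((∀ i, (IHxl i (mk yl yr yL yR)).2) ∧ ∀ j, (IHyr j).2,
            (∃ i, (IHyl i).1) ∨ ∃ j, (IHxr j (mk yl yr yL yR)).1)) y) x

instance : LE PGame.{u} := ⟨fun x y => (leLF x y).1⟩

/-- Less or fuzzy: `x ⧏ y ↔ ¬ y ≤ x`. -/
def LF (x y : PGame.{u}) : Prop := ¬y ≤ x

infixl:50 " ⧏ " => PGame.LF

instance : HasEquiv PGame.{u} := ⟨fun x y => x ≤ y ∧ y ≤ x⟩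

instance : Zero PGame.{u} := ⟨⟨PEmpty, PEmpty, PEmpty.elim, PEmpty.elim⟩⟩

instance : One PGame.{u} := ⟨⟨PUnit, PEmpty, fun _ => 0, PEmpty.elim⟩⟩

def neg : PGame.{u} → PGame.{u}
  | ⟨l, r, L, R⟩ => ⟨r, l, fun i => neg (R i), fun i => neg (L i)⟩

instance : Neg PGame.{u} := ⟨neg⟩

def add : PGame.{u} → PGame.{u} → PGame.{u}
  | mk xl xr xL xR, mk yl yr yL yR =>
    mk (xl ⊕ yl) (xr ⊕ yr)
      (Sum.rec (fun i => add (xL i) (mk yl yr yL yR)) (fun i => add (mk xl xr xL xR) (yL i)))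
      (Sum.rec (fun i => add (xR i) (mk yl yr yL yR)) (fun i => add (mk xl xr xL xR) (yR i)))
termination_by x y => (x, y)
decreasing_by
  · exact Prod.Lex.left _ _ (IsOpt.moveLeft _)
  · exact Prod.Lex.right _ (IsOpt.moveLeft _)
  · exact Prod.Lex.left _ _ (IsOpt.moveRight _)
  · exact Prod.Lex.right _ (IsOpt.moveRight _)

instance : Add PGame.{u} := ⟨add⟩

/-- The game `* = {0 | 0}`. -/
def star : PGame.{u} := ⟨PUnit, PUnit, fun _ => 0, fun _ => 0⟩

/-- The nim game `*o`. -/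
noncomputable def nim (o : Ordinal.{u}) : PGame.{u} :=
  ⟨o.ToType, o.ToType,
    fun x => nim (Ordinal.ToType.mk.symm x).val,
    fun x => nim (Ordinal.ToType.mk.symm x).val⟩
termination_by o
decreasing_by all_goals exact (Ordinal.ToType.mk.symm x).prop

end PGame

end SetTheory

open SetTheory PGame

namespace MixedDeletion

/-- The degree of a vertex `v` with respect to an edge set `E`. -/
def deg (E : Finset (Sym2 ℕ)) (v : ℕ) : ℕ := (E.filter (fun e => v ∈ e)).card

/-- The graph position with vertex set `V` and edge set `E` has no isolated vertex. -/
def NoIsol (V : Finset ℕ) (E : Finset (Sym2 ℕ)) : Prop := ∀ v ∈ V, 0 < deg E v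

/-- Result of Left deleting the vertex `v`: remove `v` and all incident edges. -/
def delV (V : Finset ℕ) (E : Finset (Sym2 ℕ)) (v : ℕ) : Finset ℕ × Finset (Sym2 ℕ) :=
  (V.erase v, E.filter (fun e => v ∉ e))

/-- Left may legally delete vertex `v` under the base (Classic) rules:
`v` is a vertex and the deletion creates no isolated vertex. -/
def LeftOK (V : Finset ℕ) (E : Finset (Sym2 ℕ)) (v : ℕ) : Prop :=
  v ∈ V ∧ NoIsol (V.erase v) (E.filter (fun e => v ∉ e))

/-- Right may legally delete edge `e` under the base (Classic) rules:
`e` is an edge and the deletion creates no isolated vertex. -/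
def RightOK (V : Finset ℕ) (E : Finset (Sym2 ℕ)) (e : Sym2 ℕ) : Prop :=
  e ∈ E ∧ NoIsol V (E.erase e)

/-- The Classic Variant of the Mixed Deletion Game, as a partizan game:
Left deletes a vertex (and incident edges), Right deletes an edge,
and no move may create an isolated vertex. -/
def classicG : Finset ℕ → Finset (Sym2 ℕ) → PGame
  | V, E =>
    PGame.mk {v : ℕ // LeftOK V E v} {e : Sym2 ℕ // RightOK V E e}
      (fun x => classicG (V.erase x.val) (E.filter (fun e => x.val ∉ e)))
      (fun x => classicG V (E.erase x.val))
  termination_by V E => V.card + E.card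
  decreasing_by
  · have h1 : (V.erase x.val).card < V.card := Finset.card_erase_lt_of_mem x.2.1
    have h2 : (E.filter (fun e => x.val ∉ e)).card ≤ E.card := Finset.card_filter_le _ _
    omega
  · have h1 : (E.erase x.val).card < E.card := Finset.card_erase_lt_of_mem x.2.1
    omega

/-- The Forbidden Leaf Variant: as the Classic Variant, but Left may not
delete leaf vertices (vertices of degree one). -/
def flG : Finset ℕ → Finset (Sym2 ℕ) → PGame
  | V, E =>
    PGame.mk {v : ℕ // LeftOK V E v ∧ deg E v ≠ 1} {e : Sym2 ℕ // RightOK V E e}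
      (fun x => flG (V.erase x.val) (E.filter (fun e => x.val ∉ e)))
      (fun x => flG V (E.erase x.val))
  termination_by V E => V.card + E.card
  decreasing_by
  · have h1 : (V.erase x.val).card < V.card := Finset.card_erase_lt_of_mem x.2.1.1
    have h2 : (E.filter (fun e => x.val ∉ e)).card ≤ E.card := Finset.card_filter_le _ _
    omega
  · have h1 : (E.erase x.val).card < E.card := Finset.card_erase_lt_of_mem x.2.1
    omega

/-- The Mutual Failures Variant: as the Classic Variant, but in any graph
position a player has a legal move if and only if the opponent does; i.e. a
base-rules move is legal only if the opponent also has a base-rules move. -/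
def mfG : Finset ℕ → Finset (Sym2 ℕ) → PGame
  | V, E =>
    PGame.mk {v : ℕ // LeftOK V E v ∧ ∃ e, RightOK V E e}
      {e : Sym2 ℕ // RightOK V E e ∧ ∃ v, LeftOK V E v}
      (fun x => mfG (V.erase x.val) (E.filter (fun e => x.val ∉ e)))
      (fun x => mfG V (E.erase x.val))
  termination_by V E => V.card + E.card
  decreasing_by
  · have h1 : (V.erase x.val).card < V.card := Finset.card_erase_lt_of_mem x.2.1.1
    have h2 : (E.filter (fun e => x.val ∉ e)).card ≤ E.card := Finset.card_filter_le _ _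
    omega
  · have h1 : (E.erase x.val).card < E.card := Finset.card_erase_lt_of_mem x.2.1.1
    omega

/-- Edge set of the path graph on vertices `0, 1, …, n-1`. -/
def pathE (n : ℕ) : Finset (Sym2 ℕ) := (Finset.range (n - 1)).image (fun i => s(i, i + 1))

/-- Edge set of the cycle graph on vertices `0, 1, …, n-1`. -/
def cycleE (n : ℕ) : Finset (Sym2 ℕ) := (Finset.range n).image (fun i => s(i, (i + 1) % n))

/-- Edge set of the complete graph on vertices `0, 1, …, n-1`. -/
def completeE (n : ℕ) : Finset (Sym2 ℕ) := (Finset.range n).sym2.filter (fun e => ¬ e.IsDiag)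

/-- The path position `P_n` in the Classic Variant. -/
def classicPath (n : ℕ) : PGame := classicG (Finset.range n) (pathE n)

/-- The cycle position `C_n` in the Classic Variant. -/
def classicCycle (n : ℕ) : PGame := classicG (Finset.range n) (cycleE n)

/-- The complete graph position `K_n` in the Classic Variant. -/
def classicComplete (n : ℕ) : PGame := classicG (Finset.range n) (completeE n)

/-- The path position `P_n` in the Forbidden Leaf Variant. -/
def flPath (n : ℕ) : PGame := flG (Finset.range n) (pathE n)

/-- The cycle position `C_n` in the Forbidden Leaf Variant. -/
def flCycle (n : ℕ) : PGame := flG (Finset.range n) (cycleE n)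

/-- The complete graph position `K_n` in the Forbidden Leaf Variant. -/
def flComplete (n : ℕ) : PGame := flG (Finset.range n) (completeE n)

/-- The path position `P_n` in the Mutual Failures Variant. -/
def mfPath (n : ℕ) : PGame := mfG (Finset.range n) (pathE n)

/-- The cycle position `C_n` in the Mutual Failures Variant. -/
def mfCycle (n : ℕ) : PGame := mfG (Finset.range n) (cycleE n)

/-- The complete graph position `K_n` in the Mutual Failures Variant. -/
def mfComplete (n : ℕ) : PGame := mfG (Finset.range n) (completeE n)

/-- The partizan game equal to a natural number `n`. -/
def natPG : ℕ → PGame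
  | 0 => 0
  | n + 1 => natPG n + 1

/-- The partizan game equal to an integer `z`. -/
def intPG (z : ℤ) : PGame := if 0 ≤ z then natPG z.toNat else -natPG (-z).toNat

/-- The game up, `↑ = {0 | *}`. -/
def up : PGame := PGame.mk PUnit PUnit (fun _ => 0) (fun _ => star)

/-- The game down, `↓ = {* | 0}`. -/
def down : PGame := -up

/-- The sum of `n` copies of up. -/
def natUp : ℕ → PGame
  | 0 => 0
  | n + 1 => natUp n + up

/-- The game `z·↑`: `|z|` copies of up if `z ≥ 0`, and `|z|` copies of down otherwise. -/
def zUp (z : ℤ) : PGame := if 0 ≤ z then natUp z.toNat else -natUp (-z).toNat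

/-- Two games have the same outcome: Left wins moving first in one iff in the other,
and Right wins moving first in one iff in the other. -/
def SameOutcome (A B : PGame) : Prop := (0 ⧏ A ↔ 0 ⧏ B) ∧ (A ⧏ 0 ↔ B ⧏ 0)

/-- Far-star equivalence: `G + X + ✶` and `H + X + ✶` have the same outcome for
every game `X`, where `✶` (far star) is any nim-heap `*k` with `k ≥ 2`. -/
def FarStarEquiv (G H : PGame) : Prop :=
  ∀ (X : PGame) (k : ℕ), 2 ≤ k → SameOutcome (G + X + nim k) (H + X + nim k)

/-- `G` has atomic weight `z` if `G` is far-star equivalent to `z·↑`. -/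
def AtomicWeight (G : PGame) (z : ℤ) : Prop := FarStarEquiv G (zUp z)

/-- A game is all-small if in every subposition Left has a move iff Right has a move. -/
def AllSmall : PGame → Prop
  | PGame.mk l r L R =>
    (Nonempty l ↔ Nonempty r) ∧ (∀ i, AllSmall (L i)) ∧ (∀ j, AllSmall (R j))

end MixedDeletion

/-!
If every edge of a position `(V, E)` has its ends in `V`, then whenever Left has no legal vertex
deletion, Right has no legal edge deletion either. So after any Right move Left can answer, moving
by induction to a position `≥ -1`, unless the position has no Right moves at all and is `≥ 0`.
Hence every such position `G` has `-1 ≤ G` and, by the same dichotomy, `-1 ⧏ G`; in particular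
`P_n ≤ -m` is impossible for `m ≥ 1`.
-/

namespace SetTheory.PGame

def LeftMoves : PGame.{u} → Type u
  | mk l _ _ _ => l

def RightMoves : PGame.{u} → Type u
  | mk _ r _ _ => r

def moveLeft : (x : PGame.{u}) → x.LeftMoves → PGame.{u}
  | mk _ _ L _ => L

def moveRight : (x : PGame.{u}) → x.RightMoves → PGame.{u}
  | mk _ _ _ R => R

/-- `-1` as `{ | 0}`, so that its right option is literally `0`. -/
def negOne : PGame.{u} := mk PEmpty PUnit PEmpty.elim fun _ => 0

theorem leLF_snd_iff_not_leLF_fst (x y : PGame.{u}) :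
    ((leLF x y).2 ↔ ¬(leLF y x).1) ∧ ((leLF y x).2 ↔ ¬(leLF x y).1) := by
  induction x generalizing y with
  | mk xl xr xL xR IHxl IHxr =>
  induction y with
  | mk yl yr yL yR IHyl IHyr =>
  constructor
  · show ((∃ i, (leLF (mk xl xr xL xR) (yL i)).1) ∨ ∃ j, (leLF (xR j) (mk yl yr yL yR)).1) ↔
      ¬((∀ i, (leLF (yL i) (mk xl xr xL xR)).2) ∧ ∀ j, (leLF (mk yl yr yL yR) (xR j)).2)
    rw [not_and_or, not_forall, not_forall]
    exact or_congr (exists_congr fun i => ((not_congr (IHyl i).2).trans not_not).symm)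
      (exists_congr fun j => ((not_congr (IHxr j _).2).trans not_not).symm)
  · show ((∃ i, (leLF (mk yl yr yL yR) (xL i)).1) ∨ ∃ j, (leLF (yR j) (mk xl xr xL xR)).1) ↔
      ¬((∀ i, (leLF (xL i) (mk yl yr yL yR)).2) ∧ ∀ j, (leLF (mk xl xr xL xR) (yR j)).2)
    rw [not_and_or, not_forall, not_forall]
    exact or_congr (exists_congr fun i => ((not_congr (IHxl i _).1).trans not_not).symm)
      (exists_congr fun j => ((not_congr (IHyr j).1).trans not_not).symm)

theorem le_iff_forall_lf {x y : PGame.{u}} :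
    x ≤ y ↔ (∀ i, x.moveLeft i ⧏ y) ∧ ∀ j, x ⧏ y.moveRight j := by
  cases x with
  | mk xl xr xL xR =>
  cases y with
  | mk yl yr yL yR =>
  show ((∀ i, (leLF (xL i) (mk yl yr yL yR)).2) ∧ ∀ j, (leLF (mk xl xr xL xR) (yR j)).2) ↔ _
  exact and_congr (forall_congr' fun i => (leLF_snd_iff_not_leLF_fst _ _).1)
    (forall_congr' fun j => (leLF_snd_iff_not_leLF_fst _ _).1)

theorem lf_iff_exists_le {x y : PGame.{u}} :
    x ⧏ y ↔ (∃ i, x ≤ y.moveLeft i) ∨ ∃ j, x.moveRight j ≤ y := by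
  rw [LF, le_iff_forall_lf, not_and_or, not_forall, not_forall]
  simp only [LF, not_not]

theorem le_trans_aux {x y z : PGame.{u}}
    (h₁ : ∀ {i}, y ≤ z → z ≤ x.moveLeft i → y ≤ x.moveLeft i)
    (h₂ : ∀ {j}, z.moveRight j ≤ x → x ≤ y → z.moveRight j ≤ y) (hxy : x ≤ y) (hyz : y ≤ z) :
    x ≤ z :=
  le_iff_forall_lf.2 ⟨fun i h => (le_iff_forall_lf.1 hxy).1 i (h₁ hyz h),
    fun j h => (le_iff_forall_lf.1 hyz).2 j (h₂ h hxy)⟩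

/-- Transitivity, proved simultaneously for the three rotations of `(x, y, z)` so that the
induction hypothesis applies to whichever game in the triple moves. -/
theorem le_trans_rotations (x y z : PGame.{u}) :
    (x ≤ y → y ≤ z → x ≤ z) ∧ (y ≤ z → z ≤ x → y ≤ x) ∧ (z ≤ x → x ≤ y → z ≤ y) := by
  induction x generalizing y z with
  | mk xl xr xL xR IHxl IHxr =>
  induction y generalizing z with
  | mk yl yr yL yR IHyl IHyr =>
  induction z with
  | mk zl zr zL zR IHzl IHzr =>
  exact ⟨le_trans_aux (fun {i} => (IHxl i _ _).2.1) fun {j} => (IHzr j).2.2,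
    le_trans_aux (fun {i} => (IHyl i _).2.2) fun {j} => (IHxr j _ _).1,
    le_trans_aux (fun {i} => (IHzl i).1) fun {j} => (IHyr j _).2.1⟩

theorem le_trans {x y z : PGame.{u}} (hxy : x ≤ y) (hyz : y ≤ z) : x ≤ z :=
  (le_trans_rotations x y z).1 hxy hyz

theorem add_mk (xl xr : Type u) (xL : xl → PGame.{u}) (xR : xr → PGame.{u})
    (yl yr : Type u) (yL : yl → PGame.{u}) (yR : yr → PGame.{u}) :
    mk xl xr xL xR + mk yl yr yL yR = mk (xl ⊕ yl) (xr ⊕ yr)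
      (Sum.rec (fun i => add (xL i) (mk yl yr yL yR)) (fun i => add (mk xl xr xL xR) (yL i)))
      (Sum.rec (fun i => add (xR i) (mk yl yr yL yR)) (fun i => add (mk xl xr xL xR) (yR i))) := by
  show add _ _ = _
  rw [add]

theorem isEmpty_rightMoves_add (x y : PGame.{u}) [hx : IsEmpty x.RightMoves]
    [hy : IsEmpty y.RightMoves] : IsEmpty (x + y).RightMoves := by
  cases x
  cases y
  rw [add_mk]
  exact ⟨Sum.elim hx.false hy.false⟩

instance isEmpty_leftMoves_zero : IsEmpty (0 : PGame.{u}).LeftMoves := ⟨PEmpty.elim⟩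

instance isEmpty_rightMoves_zero : IsEmpty (0 : PGame.{u}).RightMoves := ⟨PEmpty.elim⟩

instance isEmpty_rightMoves_one : IsEmpty (1 : PGame.{u}).RightMoves := ⟨PEmpty.elim⟩

theorem isEmpty_leftMoves_neg (x : PGame.{u}) [hx : IsEmpty x.RightMoves] :
    IsEmpty (-x).LeftMoves := by
  cases x
  exact hx

theorem le_zero_of_isEmpty_leftMoves (x : PGame.{u}) [IsEmpty x.LeftMoves] : x ≤ 0 :=
  le_iff_forall_lf.2 ⟨isEmptyElim, isEmptyElim⟩

theorem zero_le_of_isEmpty_rightMoves (x : PGame.{u}) [IsEmpty x.RightMoves] : 0 ≤ x :=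
  le_iff_forall_lf.2 ⟨isEmptyElim, isEmptyElim⟩

theorem negOne_lf_iff {x : PGame.{u}} : negOne ⧏ x ↔ (∃ i, negOne ≤ x.moveLeft i) ∨ 0 ≤ x := by
  rw [lf_iff_exists_le]
  exact or_congr_right ⟨fun ⟨_, h⟩ => h, fun h => ⟨PUnit.unit, h⟩⟩

theorem neg_le_negOne {y : PGame.{u}} [IsEmpty y.RightMoves]
    (hy : ∃ i, IsEmpty (y.moveLeft i).RightMoves) : -y ≤ negOne := by
  have := isEmpty_leftMoves_neg y
  refine le_iff_forall_lf.2 ⟨isEmptyElim, fun _ => lf_iff_exists_le.2 (Or.inr ?_)⟩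
  obtain ⟨i, hi⟩ := hy
  cases y
  exact ⟨i, @le_zero_of_isEmpty_leftMoves _ (@isEmpty_leftMoves_neg _ hi)⟩

theorem neg_add_one_le_negOne (x : PGame.{u}) [IsEmpty x.RightMoves] : -(x + 1) ≤ negOne := by
  have := isEmpty_rightMoves_add x 1
  refine neg_le_negOne ?_
  cases x
  show ∃ i, IsEmpty ((mk _ _ _ _ + mk PUnit PEmpty (fun _ => 0) PEmpty.elim).moveLeft i).RightMoves
  rw [add_mk]
  exact ⟨Sum.inr PUnit.unit, isEmpty_rightMoves_add (mk _ _ _ _) 0⟩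

end SetTheory.PGame

namespace MixedDeletion

lemma isEmpty_rightMoves_natPG : ∀ n, IsEmpty (natPG n).RightMoves
  | 0 => isEmpty_rightMoves_zero
  | n + 1 => have := isEmpty_rightMoves_natPG n; isEmpty_rightMoves_add _ _

lemma intPG_le_negOne {k : ℤ} (hk : k < 0) : intPG k ≤ negOne := by
  obtain ⟨m, hm⟩ : ∃ m, (-k).toNat = m + 1 := ⟨(-k).toNat - 1, by omega⟩
  rw [intPG, if_neg hk.not_ge, hm]
  have := isEmpty_rightMoves_natPG m
  exact neg_add_one_le_negOne _

lemma pathE_subset_sym2 (n : ℕ) : pathE n ⊆ (Finset.range n).sym2 := by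
  intro e he
  obtain ⟨i, hi, rfl⟩ := Finset.mem_image.1 he
  rw [Finset.mem_range] at hi
  exact Finset.mk_mem_sym2_iff.2 ⟨Finset.mem_range.2 (by omega), Finset.mem_range.2 (by omega)⟩

section

variable {V : Finset ℕ} {E : Finset (Sym2 ℕ)}

lemma deg_pos_iff {v : ℕ} : 0 < deg E v ↔ ∃ e ∈ E, v ∈ e := by
  rw [deg, Finset.card_pos, Finset.filter_nonempty_iff]

lemma filter_notMem_subset_sym2_erase (hE : E ⊆ V.sym2) (v : ℕ) :
    E.filter (fun e => v ∉ e) ⊆ (V.erase v).sym2 := by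
  intro e he
  rw [Finset.mem_filter] at he
  refine Finset.mem_sym2_iff.2 fun w hw =>
    Finset.mem_erase.2 ⟨?_, Finset.mem_sym2_iff.1 (hE he.1) w hw⟩
  rintro rfl
  exact he.2 hw

lemma exists_pendant_of_not_leftOK {a : ℕ} (ha : a ∈ V) (h : ¬LeftOK V E a) :
    ∃ u ∈ V, u ≠ a ∧ ∀ e ∈ E, u ∈ e → a ∈ e := by
  simp only [LeftOK, NoIsol, ha, true_and, not_forall, not_lt, Nat.le_zero, exists_prop] at h
  obtain ⟨u, hu, hdeg⟩ := h
  refine ⟨u, Finset.mem_of_mem_erase hu, Finset.ne_of_mem_erase hu, fun e he hue => ?_⟩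
  by_contra hae
  exact (deg_pos_iff.2 ⟨e, Finset.mem_filter.2 ⟨he, hae⟩, hue⟩).ne' hdeg

/-- Follow pendants `a ← u ← w` from an endpoint `a` of `e`. The edge left at `w` after deleting
`e` passes through `u`, hence is `s(u, a)`, so `w = a`: then `a` and `u` are adjacent only to each
other, `e = s(u, a)`, and deleting it isolates `u`. -/
lemma not_rightOK_of_forall_not_leftOK (hE : E ⊆ V.sym2) (hL : ∀ v, ¬LeftOK V E v)
    (e : Sym2 ℕ) : ¬RightOK V E e := by
  rintro ⟨he, hNI⟩
  obtain ⟨a, hae⟩ : ∃ a, a ∈ e := e.ind fun x _ => ⟨x, Sym2.mem_mk_left x _⟩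
  have ha : a ∈ V := Finset.mem_sym2_iff.1 (hE he) a hae
  obtain ⟨u, hu, hua, hu_a⟩ := exists_pendant_of_not_leftOK ha (hL a)
  obtain ⟨w, hw, hwu, hw_u⟩ := exists_pendant_of_not_leftOK hu (hL u)
  have edge_at_u : ∀ f ∈ E, u ∈ f → f = s(u, a) := fun f hf huf =>
    (Sym2.mem_and_mem_iff hua).1 ⟨huf, hu_a f hf huf⟩
  have hwa : w = a := by
    obtain ⟨f, hf, hwf⟩ := deg_pos_iff.1 (hNI w hw)
    have hf' := Finset.mem_of_mem_erase hf
    rw [edge_at_u f hf' (hw_u f hf' hwf), Sym2.mem_iff] at hwf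
    exact hwf.resolve_left hwu
  have he_ua : e = s(u, a) := edge_at_u e he (hw_u e he (hwa ▸ hae))
  obtain ⟨g, hg, hug⟩ := deg_pos_iff.1 (hNI u hu)
  exact Finset.ne_of_mem_erase hg ((edge_at_u g (Finset.mem_of_mem_erase hg) hug).trans he_ua.symm)

lemma negOne_lf_classicG_of_forall_leftOK (hE : E ⊆ V.sym2)
    (hL : ∀ v, LeftOK V E v → negOne ≤ classicG (V.erase v) (E.filter (fun e => v ∉ e))) :
    negOne ⧏ classicG V E := by
  rw [negOne_lf_iff, classicG]
  by_cases h : ∃ v, LeftOK V E v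
  · obtain ⟨v, hv⟩ := h
    exact Or.inl ⟨⟨v, hv⟩, hL v hv⟩
  · have hR := not_rightOK_of_forall_not_leftOK hE (not_exists.1 h)
    have : IsEmpty {e // RightOK V E e} := ⟨fun j => hR j.1 j.2⟩
    exact Or.inr (@zero_le_of_isEmpty_rightMoves _ this)

end

theorem negOne_le_classicG {V : Finset ℕ} {E : Finset (Sym2 ℕ)} (hE : E ⊆ V.sym2) :
    negOne ≤ classicG V E := by
  rw [classicG, le_iff_forall_lf]
  refine ⟨fun i => PEmpty.elim i, fun e => ?_⟩
  have hE' := (Finset.erase_subset e.1 E).trans hE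
  exact negOne_lf_classicG_of_forall_leftOK hE' fun v hv =>
    negOne_le_classicG (filter_notMem_subset_sym2_erase hE' v)
termination_by V.card + E.card
decreasing_by
  have := Finset.card_erase_lt_of_mem hv.1
  have := Finset.card_filter_le (E.erase e.1) (fun f => v ∉ f)
  have := Finset.card_erase_le (s := E) (a := e.1)
  omega

/-- In the Classic Variant, no path position `P_n` has a game value equal to a
negative integer. -/
theorem classic_path_no_negative_integer_value :
    ∀ (n : ℕ) (k : ℤ), k < 0 → ¬ (classicPath n ≈ intPG k) := by
  intro n k hk h
  have hE := pathE_subset_sym2 n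
  have hlf : negOne ⧏ classicPath n := negOne_lf_classicG_of_forall_leftOK hE fun v _ =>
    negOne_le_classicG (filter_notMem_subset_sym2_erase hE v)
  exact hlf (PGame.le_trans h.1 (intPG_le_negOne hk))

end MixedDeletion
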